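/- arXiv:1203.0780 — 5 statements merged into one kernel-verified Lean document; each statement's English description precedes it below -/
import Mathlib

section
/- (Lemma: semantic projection depends on continuations only up to traces.) If Δ ⊢ G : Δ' is derivable in the semantic projection system and Δ'' is a session with tr(Δ'') = tr(Δ), then Δ'' ⊢ G : Δ' is derivable. -/
namespace MultiPartySessions

/-- An interaction: a finite nonempty set of senders, a receiver not among them,
and a message type. -/
structure Interaction (R M : Type*) where
  senders : Finset R
  receiver : R
  msg : M
  senders_nonempty : senders.Nonempty
  receiver_not_mem : receiver ∉ senders

/-- A trace is a finite list of interactions. -/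
abbrev Trace (R M : Type*) := List (Interaction R M)

/-- A language is a set of traces. -/
abbrev Lang (R M : Type*) := Set (Trace R M)

variable {R M V : Type*}

/-- Permutation closure of a language. -/
def perm (L : Lang R M) : Lang R M := {w | ∃ v ∈ L, w.Perm v}

/-- A language of traces is well formed if whenever φ·(π→p:a)·(π'→p':b)·ψ belongs to it,
either p ∈ π' ∪ {p'} or the trace with the two interactions swapped also belongs to it. -/
def WellFormedL (L : Lang R M) : Prop :=
  ∀ (φ ψ : Trace R M) (α β : Interaction R M),
    (φ ++ α :: β :: ψ) ∈ L →
    (α.receiver ∈ β.senders ∨ α.receiver = β.receiver) ∨ (φ ++ β :: α :: ψ) ∈ L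

/-- The smallest well-formed superset of a language. -/
def closure (L : Lang R M) : Lang R M :=
  {w | ∀ K : Lang R M, L ⊆ K → WellFormedL K → w ∈ K}

/-- `IsShuffle v₁ v₂ w` holds iff `w` is an interleaving of `v₁` and `v₂`. -/
inductive IsShuffle {α : Type*} : List α → List α → List α → Prop
  | nil : IsShuffle [] [] []
  | left {a : α} {l₁ l₂ l : List α} : IsShuffle l₁ l₂ l → IsShuffle (a :: l₁) l₂ (a :: l)
  | right {a : α} {l₁ l₂ l : List α} : IsShuffle l₁ l₂ l → IsShuffle l₁ (a :: l₂) (a :: l)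

/-- Shuffle of two languages. -/
def shuffleL (L₁ L₂ : Lang R M) : Lang R M :=
  {w | ∃ v₁ ∈ L₁, ∃ v₂ ∈ L₂, IsShuffle v₁ v₂ w}

/-- Elementwise concatenation of two languages. -/
def catL (L₁ L₂ : Lang R M) : Lang R M :=
  {w | ∃ v₁ ∈ L₁, ∃ v₂ ∈ L₂, w = v₁ ++ v₂}

/-- Kleene star of a language. -/
def starL (L : Lang R M) : Lang R M :=
  {w | ∃ vs : List (Trace R M), w = vs.flatten ∧ ∀ v ∈ vs, v ∈ L}

/-- Global types. -/
inductive GlobalType (R M : Type*) where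
  | skip
  | act (α : Interaction R M)
  | seq (g₁ g₂ : GlobalType R M)
  | par (g₁ g₂ : GlobalType R M)
  | alt (g₁ g₂ : GlobalType R M)
  | star (g : GlobalType R M)

/-- Trace language of a global type. -/
def trG : GlobalType R M → Lang R M
  | .skip => {[]}
  | .act a => {[a]}
  | .seq g₁ g₂ => catL (trG g₁) (trG g₂)
  | .par g₁ g₂ => shuffleL (trG g₁) (trG g₂)
  | .alt g₁ g₂ => trG g₁ ∪ trG g₂
  | .star g => starL (trG g)

/-- Pre-session types. -/
inductive PST (R M V : Type*) where
  | done
  | var (X : V)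
  | out (p : R) (a : M) (T : PST R M V)
  | inp (s : Finset R) (a : M) (T : PST R M V)
  | ichoice (T S : PST R M V)
  | echoice (T S : PST R M V)
  | mu (X : V) (T : PST R M V)

/-- Capture-avoiding simultaneous substitution of recursion variables
(intended usage: the substituted types are closed). -/
def substAll [DecidableEq V] (ρ : V → PST R M V) : PST R M V → PST R M V
  | .done => .done
  | .var X => ρ X
  | .out p a T => .out p a (substAll ρ T)
  | .inp s a T => .inp s a (substAll ρ T)
  | .ichoice T S => .ichoice (substAll ρ T) (substAll ρ S)
  | .echoice T S => .echoice (substAll ρ T) (substAll ρ S)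
  | .mu X T => .mu X (substAll (fun Y => if Y = X then .var X else ρ Y) T)

/-- One-step unfolding of a recursive type `μX.T`. -/
def unfold [DecidableEq V] (X : V) (T : PST R M V) : PST R M V :=
  substAll (fun Y => if Y = X then .mu X T else .var Y) T

/-- Free recursion variables of a pre-session type. -/
def fv : PST R M V → Set V
  | .done => ∅
  | .var X => {X}
  | .out _ _ T => fv T
  | .inp _ _ T => fv T
  | .ichoice T S => fv T ∪ fv S
  | .echoice T S => fv T ∪ fv S
  | .mu X T => fv T \ {X}

/-- `CanOut T p a T'`: `T` offers (modulo internal choice and fold/unfold)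
the top-level output `p!a` with continuation `T'`. -/
inductive CanOut [DecidableEq V] : PST R M V → R → M → PST R M V → Prop
  | out {p : R} {a : M} {T : PST R M V} : CanOut (.out p a T) p a T
  | left {T S T' : PST R M V} {p : R} {a : M} :
      CanOut T p a T' → CanOut (.ichoice T S) p a T'
  | right {T S T' : PST R M V} {p : R} {a : M} :
      CanOut S p a T' → CanOut (.ichoice T S) p a T'
  | mu {X : V} {T T' : PST R M V} {p : R} {a : M} :
      CanOut (unfold X T) p a T' → CanOut (.mu X T) p a T'

/-- `CanIn T s a T'`: `T` offers (modulo external choice and fold/unfold)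
the top-level input `s?a` with continuation `T'`. -/
inductive CanIn [DecidableEq V] : PST R M V → Finset R → M → PST R M V → Prop
  | inp {s : Finset R} {a : M} {T : PST R M V} : CanIn (.inp s a T) s a T
  | left {T S T' : PST R M V} {s : Finset R} {a : M} :
      CanIn T s a T' → CanIn (.echoice T S) s a T'
  | right {T S T' : PST R M V} {s : Finset R} {a : M} :
      CanIn S s a T' → CanIn (.echoice T S) s a T'
  | mu {X : V} {T T' : PST R M V} {s : Finset R} {a : M} :
      CanIn (unfold X T) s a T' → CanIn (.mu X T) s a T'

/-- `T` behaves as an internal choice of outputs with pairwise distinct prefixes,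
with all continuations in `K`. -/
def OutShape [DecidableEq V] (T : PST R M V) (K : Set (PST R M V)) : Prop :=
  (∃ p a T', CanOut T p a T') ∧
  (¬ ∃ s a T', CanIn T s a T') ∧
  (∀ p a T' T'', CanOut T p a T' → CanOut T p a T'' → T' = T'') ∧
  (∀ p a T', CanOut T p a T' → T' ∈ K)

/-- `T` behaves as an external choice of inputs such that `s ⊆ s'` together with equal
messages forces equal branches, with all continuations in `K`. -/
def InShape [DecidableEq V] (T : PST R M V) (K : Set (PST R M V)) : Prop :=
  (∃ s a T', CanIn T s a T') ∧
  (¬ ∃ p a T', CanOut T p a T') ∧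
  (∀ s a T' s' T'', CanIn T s a T' → CanIn T s' a T'' → s ⊆ s' → s = s' ∧ T' = T'') ∧
  (∀ s a T', CanIn T s a T' → T' ∈ K)

/-- Session types: pre-session types that (coinductively) are either `end`, an internal
choice of outputs with pairwise distinct prefixes, or an external choice of inputs
satisfying the separation condition, all of whose continuations are again session types. -/
def IsST [DecidableEq V] (T : PST R M V) : Prop :=
  ∃ K : Set (PST R M V), T ∈ K ∧
    ∀ U ∈ K, U = PST.done ∨ OutShape U K ∨ InShape U K

/-- A buffer: a FIFO queue of message types for each ordered pair (sender, receiver). -/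
abbrev Buffer (R M : Type*) := R → R → List M

/-- A session environment, represented as a total map which is `end` outside its domain. -/
abbrev Session (R M V : Type*) := R → PST R M V

/-- The empty buffer. -/
def emptyBuf : Buffer R M := fun _ _ => []

/-- The session has a finite domain. -/
def FinDom (Δ : Session R M V) : Prop := {p | Δ p ≠ PST.done}.Finite

/-- Every role is successfully terminated. -/
def Ended (Δ : Session R M V) : Prop := ∀ p, Δ p = PST.done

/-- One reduction step of a configuration, labelled by `none` (an output, which enqueues
a message) or by `some` interaction (an input, which dequeues one message of the given
type from each sender in the interaction). -/
inductive Step [DecidableEq R] [DecidableEq V] :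
    Buffer R M → Session R M V → Option (Interaction R M) → Buffer R M → Session R M V → Prop
  | output {B : Buffer R M} {Δ : Session R M V} {p q : R} {a : M} {T' : PST R M V}
      (B' : Buffer R M) :
      CanOut (Δ p) q a T' →
      B' p q = B p q ++ [a] →
      (∀ s r, ¬(s = p ∧ r = q) → B' s r = B s r) →
      Step B Δ none B' (Function.update Δ p T')
  | input {B : Buffer R M} {Δ : Session R M V} {T' : PST R M V}
      (α : Interaction R M) (B' : Buffer R M) :
      CanIn (Δ α.receiver) α.senders α.msg T' →
      (∀ q ∈ α.senders, B q α.receiver = α.msg :: B' q α.receiver) →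
      (∀ s r, ¬(s ∈ α.senders ∧ r = α.receiver) → B' s r = B s r) →
      Step B Δ (some α) B' (Function.update Δ α.receiver T')

/-- Finite reduction sequences; the trace records the labels of the input steps, in order. -/
inductive Steps [DecidableEq R] [DecidableEq V] :
    Buffer R M → Session R M V → Trace R M → Buffer R M → Session R M V → Prop
  | refl {B : Buffer R M} {Δ : Session R M V} : Steps B Δ [] B Δ
  | tau {B B' B'' : Buffer R M} {Δ Δ' Δ'' : Session R M V} {φ : Trace R M} :
      Step B Δ none B' Δ' → Steps B' Δ' φ B'' Δ'' → Steps B Δ φ B'' Δ''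
  | act {B B' B'' : Buffer R M} {Δ Δ' Δ'' : Session R M V} {α : Interaction R M}
      {φ : Trace R M} :
      Step B Δ (some α) B' Δ' → Steps B' Δ' φ B'' Δ'' → Steps B Δ (α :: φ) B'' Δ''

/-- A live session: every reachable configuration can reach a configuration with empty
buffer where every participant has successfully terminated. -/
def Live [DecidableEq R] [DecidableEq V] (Δ : Session R M V) : Prop :=
  ∀ φ B' Δ', Steps emptyBuf Δ φ B' Δ' →
    ∃ ψ Δ'', Steps B' Δ' ψ emptyBuf Δ'' ∧ Ended Δ''

/-- Traces of a session (empty if the session is not live). -/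
def trS [DecidableEq R] [DecidableEq V] (Δ : Session R M V) : Lang R M :=
  {φ | Live Δ ∧ ∃ Δ'', Steps emptyBuf Δ φ emptyBuf Δ'' ∧ Ended Δ''}

/-- The environment transformation performed by projecting a single interaction. -/
def actionUpd [DecidableEq R] (α : Interaction R M) (Δ : Session R M V) : Session R M V :=
  fun r =>
    if r = α.receiver then PST.inp α.senders α.msg (Δ r)
    else if r ∈ α.senders then PST.out α.receiver α.msg (Δ r)
    else Δ r

/-- The semantic projection judgment `Δ ⊢ G : Δ'`. -/
inductive SP [DecidableEq R] [DecidableEq V] :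
    Session R M V → GlobalType R M → Session R M V → Prop
  | skip {Δ : Session R M V} : SP Δ .skip Δ
  | action {Δ : Session R M V} (α : Interaction R M) : SP Δ (.act α) (actionUpd α Δ)
  | seq {Δ Δ' Δ'' : Session R M V} {g₁ g₂ : GlobalType R M} :
      SP Δ g₂ Δ' → SP Δ' g₁ Δ'' → SP Δ (.seq g₁ g₂) Δ''
  | alt {Δ Δ₁ Δ₂ : Session R M V} {g₁ g₂ : GlobalType R M} (p : R) :
      SP Δ g₁ Δ₁ → SP Δ g₂ Δ₂ → (∀ q, q ≠ p → Δ₁ q = Δ₂ q) →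
      SP Δ (.alt g₁ g₂) (Function.update Δ₁ p (PST.ichoice (Δ₁ p) (Δ₂ p)))
  | iter {Δ : Session R M V} {g : GlobalType R M} (p : R) (T₁ T₂ : PST R M V) :
      SP (Function.update Δ p (PST.ichoice T₁ T₂)) g (Function.update Δ p T₁) →
      SP (Function.update Δ p T₂) (.star g) (Function.update Δ p (PST.ichoice T₁ T₂))
  | subsume {Δ Δ' Δ'' : Session R M V} {g g' : GlobalType R M} :
      SP Δ g' Δ' →
      trG g' ⊆ trG g → trG g ⊆ perm (trG g') →
      trS Δ'' ⊆ trS Δ' → trS Δ' ⊆ perm (trS Δ'') →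
      SP Δ g Δ''

/-- The projection of a global type from the initial environment assigning `end`
to every participant. -/
def SProot [DecidableEq R] [DecidableEq V] (g : GlobalType R M) (Δ : Session R M V) : Prop :=
  SP (fun _ => PST.done) g Δ

/-- `OccInp p a T`: an input prefix `p?a` occurs (syntactically) in `T`. -/
inductive OccInp (p : R) (a : M) : PST R M V → Prop
  | here {s : Finset R} {T : PST R M V} : p ∈ s → OccInp p a (.inp s a T)
  | inp {s : Finset R} {b : M} {T : PST R M V} : OccInp p a T → OccInp p a (.inp s b T)
  | out {q : R} {b : M} {T : PST R M V} : OccInp p a T → OccInp p a (.out q b T)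
  | ichoiceL {T S : PST R M V} : OccInp p a T → OccInp p a (.ichoice T S)
  | ichoiceR {T S : PST R M V} : OccInp p a S → OccInp p a (.ichoice T S)
  | echoiceL {T S : PST R M V} : OccInp p a T → OccInp p a (.echoice T S)
  | echoiceR {T S : PST R M V} : OccInp p a S → OccInp p a (.echoice T S)
  | mu {X : V} {T : PST R M V} : OccInp p a T → OccInp p a (.mu X T)

/-- One step of the compatibility relation, relative to a set `K` of types already
assumed compatible with the input `p?a`. -/
def CompatStep [DecidableEq V] (p : R) (a : M) (K : Set (PST R M V)) (T : PST R M V) : Prop :=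
  (¬ OccInp p a T) ∨
  ((∃ q b T', CanOut T q b T') ∧ ∀ q b T', CanOut T q b T' → T' ∈ K) ∨
  ((∃ s b T', CanIn T s b T') ∧
    ∀ s b T', CanIn T s b T' → (p ∈ s ∧ a ≠ b) ∨ (p ∉ s ∧ T' ∈ K))

/-- The input `p?a` is compatible with the session type `T` (greatest fixed point). -/
def Compat [DecidableEq V] (p : R) (a : M) (T : PST R M V) : Prop :=
  ∃ K : Set (PST R M V), T ∈ K ∧ ∀ U ∈ K, CompatStep p a K U

/-- The input `s?a` is compatible with `T` if `p?a` is compatible with `T` for some `p ∈ s`. -/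
def CompatIn [DecidableEq V] (s : Finset R) (a : M) (T : PST R M V) : Prop :=
  ∃ p ∈ s, Compat p a T

/-- Output case of one step of the merge relation. -/
def MergeStepOut [DecidableEq V] (K : Set (PST R M V × PST R M V × PST R M V))
    (T S U : PST R M V) : Prop :=
  (∃ p a T', CanOut T p a T') ∧
  (∀ p a, (∃ T', CanOut T p a T') ↔ (∃ S', CanOut S p a S')) ∧
  (∀ p a, (∃ T', CanOut T p a T') ↔ (∃ U', CanOut U p a U')) ∧
  (∀ p a T' S' U', CanOut T p a T' → CanOut S p a S' → CanOut U p a U' → (T', S', U') ∈ K)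

/-- Input case of one step of the merge relation: `T` and `S` are compatible external
choices and `U` combines the common branches (merged) with the residual branches of
each side. -/
def MergeStepIn [DecidableEq V] (K : Set (PST R M V × PST R M V × PST R M V))
    (T S U : PST R M V) : Prop :=
  (∃ s a T', CanIn T s a T') ∧
  (∃ s a S', CanIn S s a S') ∧
  (∀ s a T', CanIn T s a T' → (∃ S', CanIn S s a S') ∨ CompatIn s a S) ∧
  (∀ s a S', CanIn S s a S' → (∃ T', CanIn T s a T') ∨ CompatIn s a T) ∧
  (∀ s a, (∃ U', CanIn U s a U') ↔ ((∃ T', CanIn T s a T') ∨ (∃ S', CanIn S s a S'))) ∧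
  (∀ s a T' S' U', CanIn T s a T' → CanIn S s a S' → CanIn U s a U' → (T', S', U') ∈ K) ∧
  (∀ s a T' U', CanIn T s a T' → ¬(∃ S', CanIn S s a S') → CanIn U s a U' → U' = T') ∧
  (∀ s a S' U', CanIn S s a S' → ¬(∃ T', CanIn T s a T') → CanIn U s a U' → U' = S')

/-- One step of the merge relation. -/
def MergeStep [DecidableEq V] (K : Set (PST R M V × PST R M V × PST R M V))
    (T S U : PST R M V) : Prop :=
  (T = PST.done ∧ S = PST.done ∧ U = PST.done) ∨
  (∃ X, T = PST.var X ∧ S = PST.var X ∧ U = PST.var X) ∨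
  MergeStepOut K T S U ∨ MergeStepIn K T S U

/-- `MergeST T S U`: `U` is the merge `T ⋈ S` (coinductively, as greatest fixed point). -/
def MergeST [DecidableEq V] (T S U : PST R M V) : Prop :=
  ∃ K : Set (PST R M V × PST R M V × PST R M V), (T, S, U) ∈ K ∧
    ∀ x ∈ K, MergeStep K x.1 x.2.1 x.2.2

/-- The algorithmic projection judgment `Δ ⊢A G : Δ'`. -/
inductive AP [DecidableEq R] [DecidableEq V] :
    Session R M V → GlobalType R M → Session R M V → Prop
  | skip {Δ : Session R M V} : AP Δ .skip Δ
  | action {Δ : Session R M V} (α : Interaction R M) : AP Δ (.act α) (actionUpd α Δ)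
  | seq {Δ Δ' Δ'' : Session R M V} {g₁ g₂ : GlobalType R M} :
      AP Δ g₂ Δ' → AP Δ' g₁ Δ'' → AP Δ (.seq g₁ g₂) Δ''
  | alt {Δ Δ₁ Δ₂ : Session R M V} {g₁ g₂ : GlobalType R M} (p : R) (Δm : Session R M V) :
      AP Δ g₁ Δ₁ → AP Δ g₂ Δ₂ →
      (∀ q, q ≠ p → MergeST (Δ₁ q) (Δ₂ q) (Δm q)) →
      AP Δ (.alt g₁ g₂) (Function.update Δm p (PST.ichoice (Δ₁ p) (Δ₂ p)))
  | iter {Δ : Session R M V} {g : GlobalType R M}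
      (p : R) (I : Finset R) (X : V) (Xv : R → V)
      (T S : PST R M V) (Ti Si Mi : R → PST R M V)
      (hpI : p ∉ I)
      (hinj : ∀ q ∈ I, ∀ q' ∈ I, Xv q = Xv q' → q = q')
      (hXXv : ∀ q ∈ I, X ≠ Xv q)
      (hXT : X ∉ fv T) (hXTi : ∀ q ∈ I, X ∉ fv (Ti q)) (hXΔ : ∀ r, X ∉ fv (Δ r))
      (hXvT : ∀ q ∈ I, Xv q ∉ fv T) (hXvTi : ∀ q ∈ I, ∀ q' ∈ I, Xv q ∉ fv (Ti q'))
      (hXvΔ : ∀ q ∈ I, ∀ r, Xv q ∉ fv (Δ r))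
      (hmerge : ∀ q ∈ I, MergeST (Ti q) (Si q) (Mi q)) :
      AP (fun r => if r = p then PST.var X else if r ∈ I then PST.var (Xv r) else Δ r) g
         (fun r => if r = p then S else if r ∈ I then Si r else Δ r) →
      AP (fun r => if r = p then T else if r ∈ I then Ti r else Δ r) (.star g)
         (fun r => if r = p then PST.mu X (PST.ichoice T S)
                   else if r ∈ I then PST.mu (Xv r) (Mi r) else Δ r)

/-- The algorithmic projection of a global type from the initial environment
assigning `end` to every participant. -/
def AProot [DecidableEq R] [DecidableEq V] (g : GlobalType R M) (Δ : Session R M V) : Prop :=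
  AP (fun _ => PST.done) g Δ

/-- A substitution mapping every recursion variable to a closed session type. -/
def ClosedSTSubst [DecidableEq V] (ρ : V → PST R M V) : Prop :=
  ∀ X, fv (ρ X) = ∅ ∧ IsST (ρ X)

/-- Pointwise application of a substitution to a session environment. -/
def applySub [DecidableEq V] (ρ : V → PST R M V) (Δ : Session R M V) : Session R M V :=
  fun p => substAll ρ (Δ p)

/-- Implementation pre-order: `ipre L' L` means `L' ⊑ L`, i.e. `L ⊆ L' ⊆ perm L`. -/
def ipre (L' L : Lang R M) : Prop := L ⊆ L' ∧ L' ⊆ perm L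

/-- A language is regular if it is accepted by a DFA with finitely many states. -/
def IsRegularL (L : Lang R M) : Prop :=
  ∃ (σ : Type) (_ : Fintype σ) (dfa : DFA (Interaction R M) σ), dfa.accepts = L


/-- semantic projection depends on continuations only up to traces. -/
theorem semantic_projection_up_to_traces
    {R M V : Type} [DecidableEq R] [DecidableEq V]
    (g : GlobalType R M) (Δ Δ' Δ'' : Session R M V)
    (hfin : FinDom Δ) (hst : ∀ p, IsST (Δ p))
    (hfin'' : FinDom Δ'') (hst'' : ∀ p, IsST (Δ'' p))
    (hproj : SP Δ g Δ')
    (htr : trS Δ'' = trS Δ) :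
    SP Δ'' g Δ' := by
  have selfPerm : ∀ L : Lang R M, L ⊆ perm L := fun L w hw => ⟨w, hw, List.Perm.refl w⟩
  -- Step 1: SP Δ'' skip Δ via subsumption
  have h1 : SP Δ'' GlobalType.skip Δ := by
    refine SP.subsume SP.skip (le_refl _) (selfPerm _) ?_ ?_
    · rw [htr]
    · rw [htr]; exact selfPerm _
  -- Step 2: sequence with the given projection
  have h2 : SP Δ'' (.seq g .skip) Δ' := SP.seq h1 hproj
  -- Step 3: trG (seq g skip) = trG g, so subsume to fix the global type
  refine SP.subsume h2 ?_ ?_ (le_refl _) (selfPerm _)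
  · rintro w ⟨v₁, hv₁, v₂, hv₂, rfl⟩
    have : v₂ = [] := hv₂
    subst this
    simpa using hv₁
  · intro w hw
    exact ⟨w, ⟨w, hw, [], rfl, (List.append_nil w).symm⟩, List.Perm.refl w⟩

end MultiPartySessions
end

section
/- (Lemma: merging does not change the traces of a live session.) Let p be a role, T a session type and Δ a session such that {p:T} ⊎ Δ is a live session. Then for every session Δ' such that the merge Δ⋈Δ' is defined, tr({p:T} ⊎ Δ) = tr({p:T} ⊎ (Δ⋈Δ')). -/
namespace MultiPartySessions

variable {R M V : Type*}

/-!
Relate each participant's type `T` to its merged type `U` by `U = T ∨ ∃ S, T ⋈ S = U`.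
This relation is a simulation in both directions, with the same buffers on both sides.
Every move of `T` is matched by `U`, since the merge keeps all branches of `T`.
Every move of `U` is matched by `T`, except an input on a branch contributed only by `S`;
but such an input `π?a` is compatible with `T`, so the message it consumes stays forever at
the head of its queue in the original session, which contradicts liveness.
Hence both sessions are live and have the same terminating runs.
-/

section Types

variable [DecidableEq V]

lemma CanOut.not_canIn {T T' T'' : PST R M V} {p : R} {a : M} {s : Finset R} {b : M}
    (ho : CanOut T p a T') : ¬ CanIn T s b T'' := by
  intro hi
  induction ho with
  | out | left | right => cases hi
  | mu _ ih => cases hi with | mu hi => exact ih hi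

lemma OccInp.of_substAll {p : R} {a : M} {T : PST R M V} {ρ : V → PST R M V}
    (h : OccInp p a (substAll ρ T)) : OccInp p a T ∨ ∃ X, OccInp p a (ρ X) := by
  induction T generalizing ρ with
  | done => cases h
  | var X => exact .inr ⟨X, h⟩
  | out q b T ih => cases h with | out h => exact (ih h).imp .out id
  | inp s b T ih =>
      cases h with
      | here hs => exact .inl (.here hs)
      | inp h => exact (ih h).imp .inp id
  | ichoice T S ihT ihS =>
      cases h with
      | ichoiceL h => exact (ihT h).imp .ichoiceL id
      | ichoiceR h => exact (ihS h).imp .ichoiceR id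
  | echoice T S ihT ihS =>
      cases h with
      | echoiceL h => exact (ihT h).imp .echoiceL id
      | echoiceR h => exact (ihS h).imp .echoiceR id
  | mu X T ih =>
      cases h with
      | mu h =>
          rcases ih h with h | ⟨Y, hY⟩
          · exact .inl (.mu h)
          · split_ifs at hY
            · cases hY
            · exact .inr ⟨Y, hY⟩

lemma OccInp.of_unfold {p : R} {a : M} {X : V} {T : PST R M V}
    (h : OccInp p a (unfold X T)) : OccInp p a (.mu X T) := by
  rcases OccInp.of_substAll h with h | ⟨Y, hY⟩
  · exact .mu h
  · split_ifs at hY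
    · exact hY
    · cases hY

lemma OccInp.of_canOut {p r : R} {a b : M} {T T' : PST R M V}
    (h : OccInp p a T') (ho : CanOut T r b T') : OccInp p a T := by
  induction ho with
  | out => exact .out h
  | left _ ih => exact .ichoiceL (ih h)
  | right _ ih => exact .ichoiceR (ih h)
  | mu _ ih => exact .of_unfold (ih h)

lemma OccInp.of_canIn {p : R} {a b : M} {s : Finset R} {T T' : PST R M V}
    (h : OccInp p a T') (hi : CanIn T s b T') : OccInp p a T := by
  induction hi with
  | inp => exact .inp h
  | left _ ih => exact .echoiceL (ih h)
  | right _ ih => exact .echoiceR (ih h)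
  | mu _ ih => exact .of_unfold (ih h)

lemma CanIn.occInp {p : R} {a : M} {s : Finset R} {T T' : PST R M V}
    (hi : CanIn T s a T') (hp : p ∈ s) : OccInp p a T := by
  induction hi with
  | inp => exact .here hp
  | left _ ih => exact .echoiceL (ih hp)
  | right _ ih => exact .echoiceR (ih hp)
  | mu _ ih => exact .of_unfold (ih hp)

lemma Compat.of_not_occInp {p : R} {a : M} {T : PST R M V} (h : ¬ OccInp p a T) :
    Compat p a T :=
  ⟨{U | ¬ OccInp p a U}, h, fun _ hU => .inl hU⟩

lemma Compat.canOut {p r : R} {a b : M} {T T' : PST R M V}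
    (hc : Compat p a T) (ho : CanOut T r b T') : Compat p a T' := by
  obtain ⟨K, hTK, hK⟩ := hc
  rcases hK T hTK with hocc | ⟨-, hall⟩ | ⟨⟨s, c, S', hi⟩, -⟩
  · exact .of_not_occInp fun h => hocc (h.of_canOut ho)
  · exact ⟨K, hall r b T' ho, hK⟩
  · exact absurd hi ho.not_canIn

lemma Compat.ne_of_canIn_of_mem {p : R} {a b : M} {s : Finset R} {T T' : PST R M V}
    (hc : Compat p a T) (hi : CanIn T s b T') (hp : p ∈ s) : a ≠ b := by
  obtain ⟨K, hTK, hK⟩ := hc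
  rcases hK T hTK with hocc | ⟨⟨q, c, T₀, ho⟩, -⟩ | ⟨-, hall⟩
  · rintro rfl
    exact hocc (hi.occInp hp)
  · exact absurd hi ho.not_canIn
  · rcases hall s b T' hi with ⟨-, hne⟩ | ⟨hnp, -⟩
    · exact hne
    · exact absurd hp hnp

lemma Compat.canIn_of_not_mem {p : R} {a b : M} {s : Finset R} {T T' : PST R M V}
    (hc : Compat p a T) (hi : CanIn T s b T') (hnp : p ∉ s) : Compat p a T' := by
  obtain ⟨K, hTK, hK⟩ := hc
  rcases hK T hTK with hocc | ⟨⟨q, c, T₀, ho⟩, -⟩ | ⟨-, hall⟩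
  · exact .of_not_occInp fun h => hocc (h.of_canIn hi)
  · exact absurd hi ho.not_canIn
  · rcases hall s b T' hi with ⟨hp, -⟩ | ⟨-, hmem⟩
    · exact absurd hp hnp
    · exact ⟨K, hmem, hK⟩

lemma MergeST.destruct {T S U : PST R M V} (h : MergeST T S U) :
    ∃ K, MergeStep K T S U ∧ ∀ x ∈ K, MergeST x.1 x.2.1 x.2.2 :=
  let ⟨K, hmem, hK⟩ := h
  ⟨K, hK _ hmem, fun _ hx => ⟨K, hx, hK⟩⟩

def MergeRel (T U : PST R M V) : Prop := U = T ∨ ∃ S, MergeST T S U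

namespace MergeRel

lemma canOut {T U T' : PST R M V} {r : R} {b : M}
    (hrel : MergeRel T U) (h : CanOut T r b T') :
    ∃ U', CanOut U r b U' ∧ MergeRel T' U' := by
  obtain rfl | ⟨S, hm⟩ := hrel
  · exact ⟨T', h, .inl rfl⟩
  obtain ⟨K, hstep, hK⟩ := hm.destruct
  rcases hstep with ⟨rfl, -, -⟩ | ⟨X, rfl, -, -⟩ | ⟨-, hS, hU, hcont⟩ | ⟨⟨s, c, T₀, hi⟩, -⟩
  · cases h
  · cases h
  · obtain ⟨S', hS'⟩ := (hS r b).1 ⟨T', h⟩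
    obtain ⟨U', hU'⟩ := (hU r b).1 ⟨T', h⟩
    exact ⟨U', hU', .inr ⟨S', hK _ (hcont r b T' S' U' h hS' hU')⟩⟩
  · exact absurd hi h.not_canIn

lemma canOut_inv {T U U' : PST R M V} {r : R} {b : M}
    (hrel : MergeRel T U) (h : CanOut U r b U') :
    ∃ T', CanOut T r b T' ∧ MergeRel T' U' := by
  obtain rfl | ⟨S, hm⟩ := hrel
  · exact ⟨U', h, .inl rfl⟩
  obtain ⟨K, hstep, hK⟩ := hm.destruct
  rcases hstep with ⟨-, -, rfl⟩ | ⟨X, -, -, rfl⟩ | ⟨-, hS, hU, hcont⟩ |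
    ⟨⟨s, c, T₀, hi⟩, -, -, -, hU, -⟩
  · cases h
  · cases h
  · obtain ⟨T', hT'⟩ := (hU r b).2 ⟨U', h⟩
    obtain ⟨S', hS'⟩ := (hS r b).1 ⟨T', hT'⟩
    exact ⟨T', hT', .inr ⟨S', hK _ (hcont r b T' S' U' hT' hS' h)⟩⟩
  · obtain ⟨U₀, hU₀⟩ := (hU s c).2 (.inl ⟨T₀, hi⟩)
    exact absurd hU₀ h.not_canIn

lemma canIn {T U T' : PST R M V} {s : Finset R} {b : M}
    (hrel : MergeRel T U) (h : CanIn T s b T') :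
    ∃ U', CanIn U s b U' ∧ MergeRel T' U' := by
  obtain rfl | ⟨S, hm⟩ := hrel
  · exact ⟨T', h, .inl rfl⟩
  obtain ⟨K, hstep, hK⟩ := hm.destruct
  rcases hstep with ⟨rfl, -, -⟩ | ⟨X, rfl, -, -⟩ | ⟨⟨q, c, T₀, ho⟩, -⟩ |
    ⟨-, -, -, -, hU, hcommon, honly, -⟩
  · cases h
  · cases h
  · exact absurd h ho.not_canIn
  · obtain ⟨U', hU'⟩ := (hU s b).2 (.inl ⟨T', h⟩)
    by_cases hS : ∃ S', CanIn S s b S'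
    · obtain ⟨S', hS'⟩ := hS
      exact ⟨U', hU', .inr ⟨S', hK _ (hcommon s b T' S' U' h hS' hU')⟩⟩
    · exact ⟨U', hU', .inl (honly s b T' U' h hS hU')⟩

lemma canIn_inv {T U U' : PST R M V} {s : Finset R} {b : M}
    (hrel : MergeRel T U) (h : CanIn U s b U') :
    (∃ T', CanIn T s b T' ∧ MergeRel T' U') ∨ CompatIn s b T := by
  obtain rfl | ⟨S, hm⟩ := hrel
  · exact .inl ⟨U', h, .inl rfl⟩
  obtain ⟨K, hstep, hK⟩ := hm.destruct
  rcases hstep with ⟨-, -, rfl⟩ | ⟨X, -, -, rfl⟩ | ⟨⟨q, c, T₀, ho⟩, -, hU, -⟩ |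
    ⟨-, -, -, hScompat, hU, hcommon, honly, -⟩
  · cases h
  · cases h
  · obtain ⟨U₀, hU₀⟩ := (hU q c).1 ⟨T₀, ho⟩
    exact absurd h hU₀.not_canIn
  by_cases hT : ∃ T', CanIn T s b T'
  · obtain ⟨T', hT'⟩ := hT
    by_cases hS : ∃ S', CanIn S s b S'
    · obtain ⟨S', hS'⟩ := hS
      exact .inl ⟨T', hT', .inr ⟨S', hK _ (hcommon s b T' S' U' hT' hS' h)⟩⟩
    · exact .inl ⟨T', hT', .inl (honly s b T' U' hT' hS h)⟩
  · obtain hT' | ⟨S', hS'⟩ := (hU s b).1 ⟨U', h⟩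
    · exact absurd hT' hT
    · exact .inr ((hScompat s b S' hS').resolve_left hT)

lemma eq_done_iff {T U : PST R M V} (hrel : MergeRel T U) :
    T = .done ↔ U = .done := by
  obtain rfl | ⟨S, hm⟩ := hrel
  · rfl
  obtain ⟨K, hstep, -⟩ := hm.destruct
  rcases hstep with ⟨rfl, -, rfl⟩ | ⟨X, rfl, -, rfl⟩ | ⟨⟨q, c, T₀, ho⟩, -, hU, -⟩ |
    ⟨⟨s, c, T₀, hi⟩, -, -, -, hU, -⟩
  · exact Iff.rfl
  · exact Iff.rfl
  · obtain ⟨U₀, hU₀⟩ := (hU q c).1 ⟨T₀, ho⟩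
    exact ⟨(by rintro rfl; cases ho), (by rintro rfl; cases hU₀)⟩
  · obtain ⟨U₀, hU₀⟩ := (hU s c).2 (.inl ⟨T₀, hi⟩)
    exact ⟨(by rintro rfl; cases hi), (by rintro rfl; cases hU₀)⟩

end MergeRel

lemma ended_iff_of_mergeRel {Δ₁ Δ₂ : Session R M V} (hrel : ∀ q, MergeRel (Δ₁ q) (Δ₂ q)) :
    Ended Δ₁ ↔ Ended Δ₂ :=
  forall_congr' fun q => (hrel q).eq_done_iff

end Types

section Reduction

variable [DecidableEq R] [DecidableEq V]

def LiveFrom (B : Buffer R M) (Δ : Session R M V) : Prop :=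
  ∀ φ B' Δ', Steps B Δ φ B' Δ' → ∃ ψ Δ'', Steps B' Δ' ψ emptyBuf Δ'' ∧ Ended Δ''

lemma LiveFrom.step {B B₁ : Buffer R M} {Δ Δ₁ : Session R M V} {ℓ : Option (Interaction R M)}
    (hl : LiveFrom B Δ) (h : Step B Δ ℓ B₁ Δ₁) : LiveFrom B₁ Δ₁ := by
  intro φ B' Δ' hs
  cases ℓ with
  | none => exact hl φ B' Δ' (.tau h hs)
  | some α => exact hl (α :: φ) B' Δ' (.act h hs)

lemma Steps.simulate {P : Buffer R M → Session R M V → Session R M V → Prop}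
    (hsim : ∀ {B B₁ Δ₁ Δ₂ Δ₁'} {ℓ : Option (Interaction R M)}, P B Δ₁ Δ₂ →
      Step B Δ₁ ℓ B₁ Δ₁' → ∃ Δ₂', Step B Δ₂ ℓ B₁ Δ₂' ∧ P B₁ Δ₁' Δ₂')
    {B B' : Buffer R M} {Δ₁ Δ₁' Δ₂ : Session R M V} {φ : Trace R M}
    (h : Steps B Δ₁ φ B' Δ₁') (hP : P B Δ₁ Δ₂) :
    ∃ Δ₂', Steps B Δ₂ φ B' Δ₂' ∧ P B' Δ₁' Δ₂' := by
  induction h generalizing Δ₂ with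
  | refl => exact ⟨Δ₂, .refl, hP⟩
  | tau hs _ ih =>
      obtain ⟨Δ₂₁, hs₂, hP₁⟩ := hsim hP hs
      obtain ⟨Δ₂', hss₂, hP'⟩ := ih hP₁
      exact ⟨Δ₂', .tau hs₂ hss₂, hP'⟩
  | act hs _ ih =>
      obtain ⟨Δ₂₁, hs₂, hP₁⟩ := hsim hP hs
      obtain ⟨Δ₂', hss₂, hP'⟩ := ih hP₁
      exact ⟨Δ₂', .act hs₂ hss₂, hP'⟩

/-- While `p?a` is compatible with the type of `q`, the receiver `q` cannot consume a
message `p → q : a`, and compatibility survives each of its moves. -/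
lemma Step.compat_head {p q : R} {a : M} {l : List M} {B B₁ : Buffer R M}
    {Δ Δ₁ : Session R M V} {ℓ : Option (Interaction R M)}
    (hs : Step B Δ ℓ B₁ Δ₁) (hc : Compat p a (Δ q)) (hb : B p q = a :: l) :
    Compat p a (Δ₁ q) ∧ ∃ l', B₁ p q = a :: l' := by
  cases hs with
  | @output p₀ q₀ a₀ T₀ B₁ ho hpush hrest =>
      refine ⟨?_, ?_⟩
      · rcases eq_or_ne q p₀ with rfl | hq
        · simpa using hc.canOut ho
        · simpa [hq] using hc
      · by_cases hpq : p = p₀ ∧ q = q₀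
        · obtain ⟨rfl, rfl⟩ := hpq
          exact ⟨l ++ [a₀], by rw [hpush, hb, List.cons_append]⟩
        · exact ⟨l, by rw [hrest p q hpq, hb]⟩
  | @input T₀ α B₁ hi hpop hrest =>
      rcases eq_or_ne q α.receiver with rfl | hq
      · by_cases hp : p ∈ α.senders
        · have hmsg : α.msg = a := by
            have := hpop p hp
            rw [hb, List.cons.injEq] at this
            exact this.1.symm
          exact absurd hmsg.symm (hc.ne_of_canIn_of_mem hi hp)
        · exact ⟨by simpa using hc.canIn_of_not_mem hi hp,
            l, by rw [hrest p _ fun h => hp h.1, hb]⟩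
      · exact ⟨by simpa [hq] using hc, l, by rw [hrest p q fun h => hq h.2, hb]⟩

lemma Steps.compat_head {p q : R} {a : M} {l : List M} {B B' : Buffer R M}
    {Δ Δ' : Session R M V} {φ : Trace R M}
    (hs : Steps B Δ φ B' Δ') (hc : Compat p a (Δ q)) (hb : B p q = a :: l) :
    ∃ l', B' p q = a :: l' := by
  induction hs generalizing l with
  | refl => exact ⟨l, hb⟩
  | tau h _ ih | act h _ ih =>
      obtain ⟨hc₁, l₁, hb₁⟩ := h.compat_head hc hb
      exact ih hc₁ hb₁

lemma LiveFrom.not_compat_of_head {p q : R} {a : M} {l : List M} {B : Buffer R M}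
    {Δ : Session R M V} (hl : LiveFrom B Δ) (hb : B p q = a :: l) : ¬ Compat p a (Δ q) := by
  intro hc
  obtain ⟨ψ, Δ'', hs, -⟩ := hl [] B Δ .refl
  obtain ⟨l', hl'⟩ := hs.compat_head hc hb
  simp [emptyBuf] at hl'

lemma mergeRel_update {Δ₁ Δ₂ : Session R M V} {q : R} {T U : PST R M V}
    (h : MergeRel T U) (hrel : ∀ r, r ≠ q → MergeRel (Δ₁ r) (Δ₂ r)) :
    ∀ r, MergeRel (Function.update Δ₁ q T r) (Function.update Δ₂ q U r) := by
  intro r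
  rcases eq_or_ne r q with rfl | hr
  · simpa using h
  · simpa [hr] using hrel r hr

lemma Step.mergeRel_forward {B B₁ : Buffer R M} {Δ₁ Δ₁' Δ₂ : Session R M V}
    {ℓ : Option (Interaction R M)}
    (hrel : ∀ q, MergeRel (Δ₁ q) (Δ₂ q)) (hs : Step B Δ₁ ℓ B₁ Δ₁') :
    ∃ Δ₂', Step B Δ₂ ℓ B₁ Δ₂' ∧ ∀ q, MergeRel (Δ₁' q) (Δ₂' q) := by
  cases hs with
  | @output p₀ q₀ a₀ T₀ B₁ ho hpush hrest =>
      obtain ⟨U', hU', hrel'⟩ := (hrel p₀).canOut ho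
      exact ⟨_, .output B₁ hU' hpush hrest, mergeRel_update hrel' fun r _ => hrel r⟩
  | @input T₀ α B₁ hi hpop hrest =>
      obtain ⟨U', hU', hrel'⟩ := (hrel α.receiver).canIn hi
      exact ⟨_, .input α B₁ hU' hpop hrest, mergeRel_update hrel' fun r _ => hrel r⟩

lemma Step.mergeRel_backward {B B₁ : Buffer R M} {Δ₁ Δ₂ Δ₂' : Session R M V}
    {ℓ : Option (Interaction R M)}
    (hrel : ∀ q, MergeRel (Δ₁ q) (Δ₂ q)) (hl : LiveFrom B Δ₁) (hs : Step B Δ₂ ℓ B₁ Δ₂') :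
    ∃ Δ₁', Step B Δ₁ ℓ B₁ Δ₁' ∧ ∀ q, MergeRel (Δ₁' q) (Δ₂' q) := by
  cases hs with
  | @output p₀ q₀ a₀ T₀ B₁ ho hpush hrest =>
      obtain ⟨T', hT', hrel'⟩ := (hrel p₀).canOut_inv ho
      exact ⟨_, .output B₁ hT' hpush hrest, mergeRel_update hrel' fun r _ => hrel r⟩
  | @input T₀ α B₁ hi hpop hrest =>
      rcases (hrel α.receiver).canIn_inv hi with ⟨T', hT', hrel'⟩ | ⟨p, hp, hc⟩
      · exact ⟨_, .input α B₁ hT' hpop hrest, mergeRel_update hrel' fun r _ => hrel r⟩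
      · exact absurd hc (hl.not_compat_of_head (hpop p hp))

lemma Steps.mergeRel_forward {B B' : Buffer R M} {Δ₁ Δ₁' Δ₂ : Session R M V}
    {φ : Trace R M} (hrel : ∀ q, MergeRel (Δ₁ q) (Δ₂ q)) (hs : Steps B Δ₁ φ B' Δ₁') :
    ∃ Δ₂', Steps B Δ₂ φ B' Δ₂' ∧ ∀ q, MergeRel (Δ₁' q) (Δ₂' q) :=
  hs.simulate (P := fun _ Δ₁ Δ₂ => ∀ q, MergeRel (Δ₁ q) (Δ₂ q))
    (fun hP h => Step.mergeRel_forward hP h) hrel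

lemma Steps.mergeRel_backward {B B' : Buffer R M} {Δ₁ Δ₂ Δ₂' : Session R M V}
    {φ : Trace R M} (hrel : ∀ q, MergeRel (Δ₁ q) (Δ₂ q)) (hl : LiveFrom B Δ₁)
    (hs : Steps B Δ₂ φ B' Δ₂') :
    ∃ Δ₁', Steps B Δ₁ φ B' Δ₁' ∧ ∀ q, MergeRel (Δ₁' q) (Δ₂' q) := by
  obtain ⟨Δ₁', hs₁, hrel', -⟩ :=
    hs.simulate (P := fun B Δ₂ Δ₁ => (∀ q, MergeRel (Δ₁ q) (Δ₂ q)) ∧ LiveFrom B Δ₁)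
      (fun ⟨hP, hl⟩ h =>
        let ⟨Δ₁', h₁, hP'⟩ := Step.mergeRel_backward hP hl h
        ⟨Δ₁', h₁, hP', hl.step h₁⟩)
      ⟨hrel, hl⟩
  exact ⟨Δ₁', hs₁, hrel'⟩

lemma Live.of_mergeRel {Δ₁ Δ₂ : Session R M V} (hrel : ∀ q, MergeRel (Δ₁ q) (Δ₂ q))
    (hlive : Live Δ₁) : Live Δ₂ := by
  intro φ B Δ₂' hs₂
  obtain ⟨Δ₁', hs₁, hrel'⟩ := hs₂.mergeRel_backward hrel hlive
  obtain ⟨ψ, Δ₁'', hfin₁, hend⟩ := hlive φ B Δ₁' hs₁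
  obtain ⟨Δ₂'', hfin₂, hrel''⟩ := hfin₁.mergeRel_forward hrel'
  exact ⟨ψ, Δ₂'', hfin₂, (ended_iff_of_mergeRel hrel'').1 hend⟩

lemma trS_eq_of_mergeRel {Δ₁ Δ₂ : Session R M V} (hrel : ∀ q, MergeRel (Δ₁ q) (Δ₂ q))
    (hlive : Live Δ₁) : trS Δ₁ = trS Δ₂ := by
  ext φ
  constructor
  · rintro ⟨-, Δ₁', hs₁, hend⟩
    obtain ⟨Δ₂', hs₂, hrel'⟩ := hs₁.mergeRel_forward hrel
    exact ⟨hlive.of_mergeRel hrel, Δ₂', hs₂, (ended_iff_of_mergeRel hrel').1 hend⟩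
  · rintro ⟨-, Δ₂', hs₂, hend⟩
    obtain ⟨Δ₁', hs₁, hrel'⟩ := hs₂.mergeRel_backward hrel hlive
    exact ⟨hlive, Δ₁', hs₁, (ended_iff_of_mergeRel hrel').2 hend⟩

end Reduction

theorem merge_preserves_traces_general
    {R M V : Type} [DecidableEq R] [DecidableEq V]
    (p : R) (T : PST R M V) (Δ Δ' Δm : Session R M V)
    (hlive : Live (Function.update Δ p T))
    (hmerge : ∀ q, q ≠ p → MergeST (Δ q) (Δ' q) (Δm q)) :
    trS (Function.update Δ p T) = trS (Function.update Δm p T) :=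
  trS_eq_of_mergeRel (mergeRel_update (.inl rfl) fun q hq => .inr ⟨Δ' q, hmerge q hq⟩) hlive

/-- merging does not change the traces of a live session:
if `{p:T} ⊎ Δ` is live and `Δ ⋈ Δ'` is defined (with result `Δm`), then
`tr({p:T} ⊎ Δ) = tr({p:T} ⊎ (Δ ⋈ Δ'))`. -/
theorem merge_preserves_traces
    {R M V : Type} [DecidableEq R] [DecidableEq V]
    (p : R) (T : PST R M V) (Δ Δ' Δm : Session R M V)
    (hT : IsST T)
    (hst : ∀ q, IsST (Δ q)) (hfin : FinDom Δ) (hp : Δ p = PST.done)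
    (hst' : ∀ q, IsST (Δ' q)) (hfin' : FinDom Δ') (hp' : Δ' p = PST.done)
    (hlive : Live (Function.update Δ p T))
    (hmerge : ∀ q, q ≠ p → MergeST (Δ q) (Δ' q) (Δm q)) :
    trS (Function.update Δ p T) = trS (Function.update Δm p T) :=
  merge_preserves_traces_general p T Δ Δ' Δm hlive hmerge

end MultiPartySessions
end

section
/- (Lemma on well-formed closure and union.) For all languages L1 and L2 of traces, closure(L1 ∪ L2) = closure(L1) ∪ closure(L2). -/
namespace MultiPartySessions

variable {R M V : Type*}

lemma subset_closure' {R M : Type} (L : Lang R M) : L ⊆ closure L :=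
  fun _ hw K hLK _ => hLK hw

lemma wellFormed_closure' {R M : Type} (L : Lang R M) : WellFormedL (closure L) := by
  intro φ ψ α β hmem
  by_cases hc : (α.receiver ∈ β.senders ∨ α.receiver = β.receiver)
  · exact Or.inl hc
  · right
    intro K hLK hK
    rcases hK φ ψ α β (hmem K hLK hK) with h | h
    · exact absurd h hc
    · exact h

lemma closure_min' {R M : Type} {L K : Lang R M} (h : L ⊆ K) (hK : WellFormedL K) :
    closure L ⊆ K := fun _ hw => hw K h hK

lemma wellFormed_union' {R M : Type} {K₁ K₂ : Lang R M}
    (h₁ : WellFormedL K₁) (h₂ : WellFormedL K₂) : WellFormedL (K₁ ∪ K₂) := by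
  intro φ ψ α β hmem
  rcases hmem with h | h
  · rcases h₁ φ ψ α β h with hc | hs
    · exact Or.inl hc
    · exact Or.inr (Or.inl hs)
  · rcases h₂ φ ψ α β h with hc | hs
    · exact Or.inl hc
    · exact Or.inr (Or.inr hs)

lemma closure_mono' {R M : Type} {L₁ L₂ : Lang R M} (h : L₁ ⊆ L₂) :
    closure L₁ ⊆ closure L₂ :=
  fun _ hw K hLK hK => hw K (h.trans hLK) hK

/-- well-formed closure commutes with union. -/
theorem closure_union
    {R M : Type} (L₁ L₂ : Lang R M) :
    closure (L₁ ∪ L₂) = closure L₁ ∪ closure L₂ := by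
  apply Set.Subset.antisymm
  · exact closure_min'
      (Set.union_subset_union (subset_closure' L₁) (subset_closure' L₂))
      (wellFormed_union' (wellFormed_closure' L₁) (wellFormed_closure' L₂))
  · exact Set.union_subset (closure_mono' Set.subset_union_left)
      (closure_mono' Set.subset_union_right)

end MultiPartySessions
end

section
/- (Lemma relating closure, concatenation and permutation closure.) For all languages L1 and L2 of traces, closure(L1 · perm(L2)) ⊆ perm(L1 · L2). -/
namespace MultiPartySessions

variable {R M V : Type*}

/-- `closure(L₁ · perm(L₂)) ⊆ perm(L₁ · L₂)`. -/
theorem closure_cat_perm_subset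
    {R M : Type} (L₁ L₂ : Lang R M) :
    closure (catL L₁ (perm L₂)) ⊆ perm (catL L₁ L₂) := by
  intro w hw
  apply hw
  · rintro x ⟨v₁, h1, w₂, ⟨v₂, h2, hp⟩, rfl⟩
    exact ⟨v₁ ++ v₂, ⟨v₁, h1, v₂, h2, rfl⟩, hp.append_left v₁⟩
  · rintro φ ψ α β ⟨v, hv, hp⟩
    exact Or.inr ⟨v, hv, ((List.Perm.swap α β ψ).append_left φ).trans hp⟩

end MultiPartySessions
end

section
/- (Lemma: the implementation pre-order is preserved by closure of right concatenation.) For all languages L1, L2, L3, L4 of traces, if L2 ⊑ L1 and closure(L4 · L1) ⊑ L3, then closure(L4 · L2) ⊑ L3. -/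
namespace MultiPartySessions

variable {R M V : Type*}

/-- the implementation pre-order is preserved by closure of
right concatenation. -/
theorem ipre_closure_cat_right
    {R M : Type} (L₁ L₂ L₃ L₄ : Lang R M)
    (h₁ : ipre L₂ L₁) (h₂ : ipre (closure (catL L₄ L₁)) L₃) :
    ipre (closure (catL L₄ L₂)) L₃ := by
  obtain ⟨h12, h21⟩ := h₁
  obtain ⟨h3c, hc3⟩ := h₂
  have permWF : ∀ L : Lang R M, WellFormedL (perm L) := by
    intro L φ ψ α β ⟨v, hv, hperm⟩
    right
    exact ⟨v, hv, (List.Perm.append_left φ (List.Perm.swap α β ψ)).trans hperm⟩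
  have subset_closure : ∀ L : Lang R M, L ⊆ closure L := by
    intro L w hw K hLK _; exact hLK hw
  have closure_min : ∀ L K : Lang R M, L ⊆ K → WellFormedL K → closure L ⊆ K := by
    intro L K hLK hWF w hw; exact hw K hLK hWF
  have closure_mono : ∀ L K : Lang R M, L ⊆ K → closure L ⊆ closure K := by
    intro L K hLK w hw J hKJ hWF; exact hw J (hLK.trans hKJ) hWF
  have perm_mono : ∀ L K : Lang R M, L ⊆ K → perm L ⊆ perm K := by
    intro L K hLK w ⟨v, hv, hp⟩; exact ⟨v, hLK hv, hp⟩
  have perm_perm : ∀ L : Lang R M, perm (perm L) ⊆ perm L := by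
    intro L w ⟨v, ⟨u, hu, hp2⟩, hp1⟩; exact ⟨u, hu, hp1.trans hp2⟩
  constructor
  · exact h3c.trans (closure_mono _ _ (fun w ⟨v₄, h4, v₁, hv1, he⟩ =>
      ⟨v₄, h4, v₁, h12 hv1, he⟩))
  · apply closure_min
    · intro w ⟨v₄, h4, v₂, hv2, he⟩
      obtain ⟨v₁, hv1, hp⟩ := h21 hv2
      have : v₄ ++ v₂ ∈ perm (catL L₄ L₁) :=
        ⟨v₄ ++ v₁, ⟨v₄, h4, v₁, hv1, rfl⟩, List.Perm.append_left v₄ hp⟩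
      rw [he]
      exact perm_perm L₃ (perm_mono _ _ ((subset_closure _).trans hc3) this)
    · exact permWF L₃

end MultiPartySessions
end
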